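/- arXiv:2409.07580 — 2 statements merged into one kernel-verified Lean document; each statement's English description precedes it below -/
import Mathlib

section
/- Fix s ∈ F_2^n with Hamming weight t ≥ 1. For each subset description, let D_0^s be the uniform distribution on matrices G ∈ F_2^{n×m} conditioned on s^T G = 0, let D_1^s be the distribution obtained by sampling v ~ Ber(m, ε) and then G uniform subject to s^T G = v, and let D_2^s be the distribution obtained by sampling i uniform in [n], v ~ Ber(m, ε), G ← D_0^s, and replacing row G_i with G_i ⊕ v. Then D_2^s = (t/n)·D_1^s + (1 − t/n)·D_0^s as distributions. -/
/-!
Adding `v` to row `i` of `G` changes `sᵀG` by `sᵢ • v`. For `i` outside the support of `s` the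
`D0`-mass of the perturbed matrix is therefore `D0 G`, whatever `v` is. For `i` in the support,
the perturbed matrix satisfies `sᵀ(·) = 0` exactly when `v = sᵀG`; since `G ↦ sᵀG` is a
surjective additive map, all its fibres have the size of its kernel, so averaging over
`v ~ Ber(m, ε)` gives `D1 G`. The uniform choice of `i` hits the support with probability `t/n`.
-/

open Finset Matrix

theorem updateRow_add_eq_add_updateRow_zero {ι κ R : Type*} [DecidableEq ι] [AddCommMonoid R]
    (G : Matrix ι κ R) (i : ι) (v : κ → R) :
    updateRow G i (G i + v) = G + updateRow 0 i v := by
  ext x j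
  by_cases h : x = i <;> simp [updateRow_apply, h]

section

variable {ι κ R : Type*} [Fintype ι] [DecidableEq ι]

theorem vecMul_updateRow_zero [Semiring R] (s : ι → R) (i : ι) (w : κ → R) :
    vecMul s (updateRow 0 i w) = s i • w := by
  ext j
  simp [vecMul, dotProduct, updateRow_apply]

theorem vecMul_updateRow_add [Semiring R] (s : ι → R) (G : Matrix ι κ R) (i : ι)
    (v : κ → R) : vecMul s (updateRow G i (G i + v)) = vecMul s G + s i • v := by
  rw [updateRow_add_eq_add_updateRow_zero, vecMul_add, vecMul_updateRow_zero]

theorem vecMul_updateRow_add_of_eq_zero [Semiring R] {s : ι → R} {i : ι}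
    (hi : s i = 0) (G : Matrix ι κ R) (v : κ → R) :
    vecMul s (updateRow G i (G i + v)) = vecMul s G := by
  rw [vecMul_updateRow_add, hi, zero_smul, add_zero]

theorem vecMul_updateRow_add_eq_zero_iff {s : ι → ZMod 2} {i : ι} (hi : s i = 1)
    (G : Matrix ι κ (ZMod 2)) (v : κ → ZMod 2) :
    vecMul s (updateRow G i (G i + v)) = 0 ↔ vecMul s G = v := by
  rw [vecMul_updateRow_add, hi, one_smul, ← ZModModule.sub_eq_add, sub_eq_zero]

theorem vecMul_surjective_of_isUnit [Semiring R] {s : ι → R} {i : ι}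
    (hi : IsUnit (s i)) : Function.Surjective (vecMul s : Matrix ι κ R → κ → R) := fun v =>
  ⟨updateRow 0 i (((hi.unit⁻¹ : Rˣ) : R) • v), by
    rw [vecMul_updateRow_zero, smul_smul, IsUnit.mul_val_inv, one_smul]⟩

def vecMulAddHom [Semiring R] (s : ι → R) : Matrix ι κ R →+ (κ → R) where
  toFun := vecMul s
  map_zero' := vecMul_zero s
  map_add' G H := vecMul_add G H s

theorem card_vecMul_fiber_eq [Ring R] [Fintype κ] [DecidableEq κ] [Fintype R]
    [DecidableEq R] {s : ι → R} {i : ι} (hi : IsUnit (s i)) (v w : κ → R) :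
    #{G : Matrix ι κ R | vecMul s G = v} = #{G : Matrix ι κ R | vecMul s G = w} :=
  AddMonoidHom.card_fiber_eq_of_mem_range (vecMulAddHom s)
    (vecMul_surjective_of_isUnit hi v) (vecMul_surjective_of_isUnit hi w)

end

theorem sum_ite_eq_card_mul_add {ι R : Type*} [Fintype ι] [Ring R] (p : ι → Prop)
    [DecidablePred p] (a b : R) :
    ∑ i, (if p i then a else b) = #{i | p i} * a + (Fintype.card ι - #{i | p i}) * b := by
  have hcard := card_filter_add_card_filter_not (s := univ) p
  rw [card_univ] at hcard
  rw [sum_ite, sum_const, sum_const, nsmul_eq_mul, nsmul_eq_mul, ← hcard]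
  push_cast
  rw [add_sub_cancel_left]

def bernoulliWeight {κ : Type*} [Fintype κ] (ε : ℝ) (v : κ → ZMod 2) : ℝ :=
  ∏ j, if v j = 1 then ε else 1 - ε

theorem sum_bernoulliWeight {κ : Type*} [Fintype κ] [DecidableEq κ] (ε : ℝ) :
    ∑ v : κ → ZMod 2, bernoulliWeight ε v = 1 := by
  have hcoord : ∑ x : ZMod 2, (if x = 1 then ε else 1 - ε) = 1 := by
    simp [ZMod, Fin.sum_univ_two]
  calc ∑ v : κ → ZMod 2, bernoulliWeight ε v
      = ∏ _j : κ, ∑ x : ZMod 2, (if x = 1 then ε else 1 - ε) :=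
        (Fintype.prod_sum fun (_ : κ) (x : ZMod 2) => if x = 1 then ε else 1 - ε).symm
    _ = 1 := by rw [hcoord, prod_const_one]

theorem planted_xor_mixture_general (n m t : ℕ) (ε : ℝ)
    (ht1 : 1 ≤ t) (s : Fin n → ZMod 2)
    (hs : (Finset.univ.filter (fun i => s i = 1)).card = t)
    (D0 D1 D2 : Matrix (Fin n) (Fin m) (ZMod 2) → ℝ)
    (hD0 : D0 = fun G => if Matrix.vecMul s G = 0 then
        1 / ((Finset.univ.filter
          (fun G' : Matrix (Fin n) (Fin m) (ZMod 2) => Matrix.vecMul s G' = 0)).card : ℝ)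
      else 0)
    (hD1 : D1 = fun G => ∑ v : Fin m → ZMod 2,
        (∏ j, if v j = 1 then ε else 1 - ε) *
          (if Matrix.vecMul s G = v then
            1 / ((Finset.univ.filter
              (fun G' : Matrix (Fin n) (Fin m) (ZMod 2) => Matrix.vecMul s G' = v)).card : ℝ)
          else 0))
    (hD2 : D2 = fun G => (1/(n : ℝ)) * ∑ i : Fin n, ∑ v : Fin m → ZMod 2,
        (∏ j, if v j = 1 then ε else 1 - ε) * D0 (Matrix.updateRow G i (G i + v))) :
    D2 = fun G => ((t : ℝ)/n) * D1 G + (1 - (t : ℝ)/n) * D0 G := by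
  obtain ⟨i₀, hi₀⟩ : ∃ i, s i = 1 := by
    obtain ⟨i, hi⟩ := card_pos.mp (hs ▸ ht1 : 0 < #{i | s i = 1})
    exact ⟨i, (mem_filter.mp hi).2⟩
  have hD1G : ∀ G, D1 G = bernoulliWeight ε (vecMul s G) *
      (1 / #{G' : Matrix (Fin n) (Fin m) (ZMod 2) | vecMul s G' = 0}) := by
    intro G
    simp only [hD1, mul_ite, mul_zero, sum_ite_eq, mem_univ, if_true]
    rw [card_vecMul_fiber_eq (hi₀ ▸ isUnit_one) (vecMul s G) 0]
    rfl
  have hrow : ∀ G i, ∑ v, bernoulliWeight ε v * D0 (updateRow G i (G i + v)) =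
      if s i = 1 then D1 G else D0 G := by
    intro G i
    split_ifs with hi
    · simp only [hD0, vecMul_updateRow_add_eq_zero_iff hi, hD1G, mul_ite, mul_zero, sum_ite_eq,
        mem_univ, if_true]
    · have hi0 : s i = 0 := (by decide : ∀ a : ZMod 2, a ≠ 1 → a = 0) _ hi
      simp only [vecMul_updateRow_add_of_eq_zero hi0, hD0, ← sum_mul, sum_bernoulliWeight,
        one_mul]
  have hn : (n : ℝ) ≠ 0 := Nat.cast_ne_zero.mpr i₀.pos.ne'
  funext G
  calc D2 G = 1 / n * ∑ i, ∑ v, bernoulliWeight ε v * D0 (updateRow G i (G i + v)) := by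
        rw [hD2]; rfl
    _ = 1 / n * (t * D1 G + (n - t) * D0 G) := by
        simp only [hrow, sum_ite_eq_card_mul_add, hs, Fintype.card_fin]
    _ = t / n * D1 G + (1 - t / n) * D0 G := by
        field_simp

/-- Decomposition of the row-perturbed planted-XOR distribution.  Fix `s` of
Hamming weight `t ≥ 1`.  `D0` is uniform on matrices `G` with `sᵀG = 0`; `D1`
samples `v ~ Ber(m, ε)` and then `G` uniform with `sᵀG = v`; `D2` samples
`i ← [n]`, `v ~ Ber(m, ε)`, `G ← D0` and replaces row `i` of `G` by `G_i ⊕ v`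
(expressed below via the involution `G ↦ updateRow G i (G i + v)`).  Then
`D2 = (t/n)·D1 + (1 - t/n)·D0`. -/
theorem planted_xor_mixture (n m t : ℕ) (ε : ℝ) (hε0 : 0 ≤ ε) (hε1 : ε ≤ 1)
    (ht1 : 1 ≤ t) (htn : t ≤ n) (s : Fin n → ZMod 2)
    (hs : (Finset.univ.filter (fun i => s i = 1)).card = t)
    (D0 D1 D2 : Matrix (Fin n) (Fin m) (ZMod 2) → ℝ)
    (hD0 : D0 = fun G => if Matrix.vecMul s G = 0 then
        1 / ((Finset.univ.filter
          (fun G' : Matrix (Fin n) (Fin m) (ZMod 2) => Matrix.vecMul s G' = 0)).card : ℝ)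
      else 0)
    (hD1 : D1 = fun G => ∑ v : Fin m → ZMod 2,
        (∏ j, if v j = 1 then ε else 1 - ε) *
          (if Matrix.vecMul s G = v then
            1 / ((Finset.univ.filter
              (fun G' : Matrix (Fin n) (Fin m) (ZMod 2) => Matrix.vecMul s G' = v)).card : ℝ)
          else 0))
    (hD2 : D2 = fun G => (1/(n : ℝ)) * ∑ i : Fin n, ∑ v : Fin m → ZMod 2,
        (∏ j, if v j = 1 then ε else 1 - ε) * D0 (Matrix.updateRow G i (G i + v))) :
    D2 = fun G => ((t : ℝ)/n) * D1 G + (1 - (t : ℝ)/n) * D0 G :=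
  planted_xor_mixture_general n m t ε ht1 s hs D0 D1 D2 hD0 hD1 hD2
end

section
/- Let a ∈ {0,1}^n be a string with |#{i : a_i = 1} − #{i : a_i = 0}| ≤ n^{0.6}·2 (i.e., a is (1/n^{0.4})-biased, so r = #{i : a_i = 1} satisfies n/2 − n^{0.6} ≤ r ≤ n/2 + n^{0.6}), let b ∈ {0,1}, let c > 0 be a constant, and let s be drawn uniformly at random from the set of vectors in {0,1}^n of Hamming weight exactly ⌈c log n⌉. Then Pr_s[a · s = b] ≤ 1/2 + negl(n), where negl(n) denotes a function that is eventually smaller than any inverse polynomial. -/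
open Finset Polynomial Filter Real

/-!
Identify `s` with its support `S`, a uniformly random `ℓ`-subset of `[n]`, so that `a · s` is the
parity of `|S ∩ A|`, where `A` is the support of `a`. Then `Pr[a · s = b] - 1/2` is at most half
the normalized character sum `∑_S (-1)^|S ∩ A|`, and this sum is the coefficient of `X^ℓ` in
`(1 - X)^|A| (1 + X)^(n - |A|) = (1 - X²)^m (1 ± X)^d` with `m ≤ n` and `d = |n - 2|A|| ≤ 2n^0.6`.
Each of the `ℓ + 1` terms of that coefficient is at most `(2n^0.6)^ℓ`, whereas
`C(n, ℓ) ≥ (n / 2ℓ)^ℓ`; for `ℓ = ⌈c log n⌉` the quotient is `n^(-Ω(log n))`.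
-/

theorem two_mul_card_filter_natCast_eq_le {α : Type*} (s : Finset α) (f : α → ℕ) (b : ZMod 2) :
    2 * (#(s.filter fun x => (f x : ZMod 2) = b) : ℝ) ≤ #s + |∑ x ∈ s, (-1 : ℝ) ^ f x| := by
  obtain ⟨ε, hε, hparity⟩ : ∃ ε : ℝ, |ε| = 1 ∧
      ∀ k : ℕ, 2 * (if (k : ZMod 2) = b then 1 else 0 : ℝ) = 1 + ε * (-1) ^ k := by
    obtain rfl | rfl : b = 0 ∨ b = 1 := by revert b; decide
    · refine ⟨1, abs_one, fun k => ?_⟩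
      rcases Nat.even_or_odd k with hk | hk <;>
        norm_num [ZMod.natCast_eq_zero_iff_even, hk, hk.neg_one_pow, Nat.not_even_iff_odd]
    · refine ⟨-1, by simp, fun k => ?_⟩
      rcases Nat.even_or_odd k with hk | hk <;>
        norm_num [ZMod.natCast_eq_one_iff_odd, hk, hk.neg_one_pow, Nat.not_odd_iff_even]
  calc 2 * (#(s.filter fun x => (f x : ZMod 2) = b) : ℝ)
      = ∑ x ∈ s, 2 * (if (f x : ZMod 2) = b then 1 else 0 : ℝ) := by
        rw [← mul_sum, sum_boole]
    _ = #s + ε * ∑ x ∈ s, (-1 : ℝ) ^ f x := by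
        simp only [hparity, sum_add_distrib, mul_sum, sum_const, nsmul_one]
    _ ≤ #s + |∑ x ∈ s, (-1 : ℝ) ^ f x| := by
        gcongr
        exact (le_abs_self _).trans (by rw [abs_mul, hε, one_mul])

section Polynomial

variable {R : Type*} [CommRing R]

theorem coeff_one_add_C_mul_X_pow (σ : R) (d k : ℕ) :
    ((1 + C σ * X) ^ d).coeff k = σ ^ k * d.choose k := by
  rw [add_comm, add_pow, finsetSum_coeff]
  simp only [one_pow, mul_one, mul_pow, ← C_pow, coeff_mul_natCast, coeff_C_mul_X_pow, ite_mul,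
    zero_mul]
  rw [sum_ite_eq]
  split_ifs with hk
  · rfl
  · rw [Nat.choose_eq_zero_of_lt (by simpa [Nat.lt_succ_iff] using hk)]
    simp

theorem one_sub_X_sq_pow_eq_expand (m : ℕ) :
    (1 - X ^ 2 : R[X]) ^ m = expand R 2 ((1 + C (-1) * X) ^ m) := by
  simp [sub_eq_add_neg]

theorem coeff_one_sub_X_sq_pow (m v : ℕ) :
    ((1 - X ^ 2 : R[X]) ^ m).coeff v =
      if 2 ∣ v then (-1 : R) ^ (v / 2) * m.choose (v / 2) else 0 := by
  rw [one_sub_X_sq_pow_eq_expand, coeff_expand two_pos, coeff_one_add_C_mul_X_pow]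

theorem one_sub_X_pow_mul_one_add_X_pow (r q : ℕ) :
    ∃ σ : R, (σ = 1 ∨ σ = -1) ∧
      (1 - X) ^ r * (1 + X) ^ q = (1 - X ^ 2) ^ min r q * (1 + C σ * X) ^ (max r q - min r q) := by
  have hsq : ((1 : R[X]) - X) * (1 + X) = 1 - X ^ 2 := by ring
  rcases le_total r q with h | h
  · refine ⟨1, Or.inl rfl, ?_⟩
    rw [min_eq_left h, max_eq_right h, map_one, one_mul, ← hsq, mul_pow, mul_assoc, ← pow_add,
      Nat.add_sub_cancel' h]
  · refine ⟨-1, Or.inr rfl, ?_⟩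
    rw [min_eq_right h, max_eq_left h, map_neg, map_one, neg_one_mul, ← sub_eq_add_neg, ← hsq,
      mul_pow, mul_right_comm, ← pow_add, Nat.add_sub_cancel' h]

theorem abs_coeff_one_sub_X_sq_pow_le {m : ℕ} {z : ℝ} (hz : 0 ≤ z) (hm : (m : ℝ) ≤ z ^ 2)
    (v : ℕ) : |((1 - X ^ 2 : ℝ[X]) ^ m).coeff v| ≤ z ^ v := by
  rw [coeff_one_sub_X_sq_pow]
  split_ifs with hv
  · obtain ⟨j, rfl⟩ := hv
    calc |(-1 : ℝ) ^ (2 * j / 2) * m.choose (2 * j / 2)| = m.choose j := by simp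
      _ ≤ (m : ℝ) ^ j := mod_cast Nat.choose_le_pow m j
      _ ≤ (z ^ 2) ^ j := by gcongr
      _ = z ^ (2 * j) := by rw [pow_mul]
  · simp only [abs_zero]; positivity

theorem abs_coeff_one_add_C_mul_X_pow_le {d : ℕ} {σ z : ℝ} (hσ : |σ| ≤ 1) (hd : (d : ℝ) ≤ z)
    (t : ℕ) : |((1 + C σ * X) ^ d).coeff t| ≤ z ^ t := by
  rw [coeff_one_add_C_mul_X_pow, abs_mul, abs_pow, Nat.abs_cast]
  calc |σ| ^ t * d.choose t ≤ 1 * d ^ t := by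
        gcongr
        · exact pow_le_one₀ (abs_nonneg σ) hσ
        · exact mod_cast Nat.choose_le_pow d t
    _ ≤ z ^ t := by rw [one_mul]; gcongr

theorem abs_coeff_one_sub_X_sq_pow_mul_le {m d : ℕ} {σ z : ℝ} (hσ : |σ| ≤ 1)
    (hm : (m : ℝ) ≤ z ^ 2) (hd : (d : ℝ) ≤ z) (ℓ : ℕ) :
    |((1 - X ^ 2 : ℝ[X]) ^ m * (1 + C σ * X) ^ d).coeff ℓ| ≤ (ℓ + 1) * z ^ ℓ := by
  have hz : 0 ≤ z := (Nat.cast_nonneg d).trans hd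
  rw [coeff_mul]
  calc |∑ x ∈ antidiagonal ℓ, ((1 - X ^ 2 : ℝ[X]) ^ m).coeff x.1 * ((1 + C σ * X) ^ d).coeff x.2|
      ≤ ∑ x ∈ antidiagonal ℓ, z ^ ℓ := by
        refine (abs_sum_le_sum_abs _ _).trans (sum_le_sum fun x hx => ?_)
        rw [abs_mul, ← mem_antidiagonal.mp hx, pow_add]
        exact mul_le_mul (abs_coeff_one_sub_X_sq_pow_le hz hm _)
          (abs_coeff_one_add_C_mul_X_pow_le hσ hd _) (abs_nonneg _) (by positivity)
    _ = (ℓ + 1) * z ^ ℓ := by simp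

theorem coeff_prod_one_add_C_mul_X {ι : Type*} (s : Finset ι) (w : ι → R) (ℓ : ℕ) :
    (∏ i ∈ s, (1 + C (w i) * X)).coeff ℓ = ∑ t ∈ s.powersetCard ℓ, ∏ i ∈ t, w i := by
  classical
  simp only [prod_one_add, finsetSum_coeff, prod_mul_distrib, prod_const, ← map_prod,
    coeff_C_mul_X_pow, powersetCard_eq_filter, sum_filter]
  simp_rw [eq_comm (a := ℓ)]

theorem sum_powersetCard_neg_one_pow_card_filter {ι : Type*} (s : Finset ι) (p : ι → Prop)
    [DecidablePred p] (ℓ : ℕ) :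
    ∑ t ∈ s.powersetCard ℓ, (-1 : R) ^ #(t.filter p) =
      ((1 - X : R[X]) ^ #(s.filter p) * (1 + X) ^ #(s.filter fun i => ¬ p i)).coeff ℓ := by
  calc ∑ t ∈ s.powersetCard ℓ, (-1 : R) ^ #(t.filter p)
      = ∑ t ∈ s.powersetCard ℓ, ∏ i ∈ t, if p i then (-1 : R) else 1 := by
        simp only [prod_ite, prod_const, one_pow, mul_one]
    _ = _ := by
        rw [← coeff_prod_one_add_C_mul_X]
        simp only [apply_ite (fun a => 1 + C a * X), prod_ite, prod_const, map_neg, map_one,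
          neg_one_mul, one_mul, ← sub_eq_add_neg]

theorem abs_sum_powersetCard_neg_one_pow_card_filter_le {ι : Type*} (s : Finset ι)
    (p : ι → Prop) [DecidablePred p] (ℓ : ℕ) {z : ℝ} (hs : (#s : ℝ) ≤ z ^ 2)
    (hbias : |(#s : ℝ) - 2 * #(s.filter p)| ≤ z) :
    |∑ t ∈ s.powersetCard ℓ, (-1 : ℝ) ^ #(t.filter p)| ≤ (ℓ + 1) * z ^ ℓ := by
  have hcard := card_filter_add_card_filter_not (s := s) (p := p)
  obtain ⟨σ, hσ, hfactor⟩ := one_sub_X_pow_mul_one_add_X_pow (R := ℝ) #(s.filter p)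
    #(s.filter fun i => ¬ p i)
  rw [sum_powersetCard_neg_one_pow_card_filter, hfactor]
  refine abs_coeff_one_sub_X_sq_pow_mul_le (by rcases hσ with rfl | rfl <;> simp) ?_ ?_ ℓ
  · exact le_trans (mod_cast (min_le_left _ _).trans (hcard ▸ Nat.le_add_right _ _)) hs
  · rw [← hcard, Nat.cast_add] at hbias
    rw [Nat.cast_sub min_le_max, Nat.cast_max, Nat.cast_min, max_sub_min_eq_abs]
    rw [abs_le] at hbias ⊢
    constructor <;> linarith

end Polynomial

section ZModTwoVectors

variable {ι : Type*} [Fintype ι]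

theorem sum_mul_eq_card_filter (a s : ι → ZMod 2) :
    ∑ i, a i * s i = (#((univ.filter fun i => s i = 1).filter fun i => a i = 1) : ZMod 2) := by
  rw [filter_filter, natCast_card_filter]
  refine sum_congr rfl fun i _ => ?_
  generalize a i = x, s i = y
  revert x y; decide

variable [DecidableEq ι]

theorem card_filter_filter_support_eq_card_filter_powersetCard (ℓ : ℕ) (P : Finset ι → Prop)
    [DecidablePred P] :
    #((univ.filter fun s : ι → ZMod 2 => #(univ.filter fun i => s i = 1) = ℓ).filter
        fun s => P (univ.filter fun i => s i = 1)) = #((powersetCard ℓ univ).filter P) := by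
  have hsupp (S : Finset ι) :
      (univ.filter fun i => (if i ∈ S then 1 else 0 : ZMod 2) = 1) = S := by
    ext i; by_cases h : i ∈ S <;> simp [h]
  refine card_nbij' (fun s => univ.filter fun i => s i = 1)
    (fun S i => if i ∈ S then 1 else 0) ?_ ?_ ?_ ?_
  · intro s hs
    simpa [mem_powersetCard] using hs
  · intro S hS
    simpa [hsupp, mem_powersetCard] using hS
  · intro s _
    funext i
    have : ∀ x : ZMod 2, x ≠ 1 → x = 0 := by decide
    by_cases h : s i = 1 <;> simp [h, this]
  · intro S _
    exact hsupp S

theorem card_filter_sum_mul_eq_div_card_le (a : ι → ZMod 2) (b : ZMod 2) (ℓ : ℕ) {z : ℝ}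
    (hcard : (Fintype.card ι : ℝ) ≤ z ^ 2)
    (hbias : |(Fintype.card ι : ℝ) - 2 * #(univ.filter fun i => a i = 1)| ≤ z) :
    (#((univ.filter fun s : ι → ZMod 2 => #(univ.filter fun i => s i = 1) = ℓ).filter
        fun s => ∑ i, a i * s i = b) : ℝ) /
      #(univ.filter fun s : ι → ZMod 2 => #(univ.filter fun i => s i = 1) = ℓ)
      ≤ 1 / 2 + (ℓ + 1) * z ^ ℓ / (2 * (Fintype.card ι).choose ℓ) := by
  have hnum : #((univ.filter fun s : ι → ZMod 2 => #(univ.filter fun i => s i = 1) = ℓ).filter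
      fun s => ∑ i, a i * s i = b) =
      #((powersetCard ℓ univ).filter fun S => (#(S.filter fun i => a i = 1) : ZMod 2) = b) := by
    simp_rw [sum_mul_eq_card_filter]
    exact card_filter_filter_support_eq_card_filter_powersetCard ℓ
      fun S => (#(S.filter fun i => a i = 1) : ZMod 2) = b
  have hden : #(univ.filter fun s : ι → ZMod 2 => #(univ.filter fun i => s i = 1) = ℓ) =
      (Fintype.card ι).choose ℓ := by
    simpa using
      card_filter_filter_support_eq_card_filter_powersetCard (ι := ι) ℓ fun _ => True
  have hparity := two_mul_card_filter_natCast_eq_le (powersetCard ℓ univ)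
    (fun S => #(S.filter fun i => a i = 1)) b
  have hsum := abs_sum_powersetCard_neg_one_pow_card_filter_le univ (fun i => a i = 1) ℓ
    (by rwa [card_univ]) (by rwa [card_univ])
  rw [card_powersetCard, card_univ] at hparity
  rw [hnum, hden]
  rcases Nat.eq_zero_or_pos ((Fintype.card ι).choose ℓ) with h0 | hpos
  · simp [h0]
  · rw [div_le_iff₀ (by positivity)]
    field_simp
    linarith

end ZModTwoVectors

theorem div_pow_le_choose (n ℓ : ℕ) : (((n + 1 - ℓ : ℕ) : ℝ) / ℓ) ^ ℓ ≤ n.choose ℓ := by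
  rw [div_pow]
  refine le_trans ?_ (Nat.pow_le_choose ℓ n)
  gcongr
  exact_mod_cast ℓ.factorial_le_pow

noncomputable def parityAdvantageBound (n ℓ : ℕ) : ℝ :=
  (ℓ + 1) * (2 * (n : ℝ) ^ (0.6 : ℝ)) ^ ℓ / (2 * n.choose ℓ)

theorem parityAdvantageBound_le {n ℓ : ℕ} {t : ℝ} (ht : (n : ℝ) = t ^ 5) (hℓ : 1 ≤ ℓ)
    (hℓt : 4 * (ℓ : ℝ) ≤ t) : parityAdvantageBound n ℓ ≤ (t ^ (ℓ - 1))⁻¹ := by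
  have hℓ' : (1 : ℝ) ≤ ℓ := mod_cast hℓ
  have ht4 : 4 ≤ t := by linarith
  have ht0 : 0 < t := by linarith
  have hn06 : (n : ℝ) ^ (0.6 : ℝ) = t ^ 3 := by
    rw [ht, ← Real.rpow_natCast t 5, ← Real.rpow_mul ht0.le]
    norm_num
  have ht5 : t ≤ t ^ 5 := le_self_pow₀ (by linarith) (by norm_num)
  have hℓn : ℓ ≤ n := by
    have : (ℓ : ℝ) ≤ n := by rw [ht]; linarith
    exact_mod_cast this
  have hchoose : (t ^ 5 / (2 * ℓ)) ^ ℓ ≤ n.choose ℓ := by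
    refine le_trans ?_ (div_pow_le_choose n ℓ)
    refine pow_le_pow_left₀ (by positivity) ?_ ℓ
    rw [div_le_div_iff₀ (by positivity) (by positivity), Nat.cast_sub (by omega), ← ht]
    push_cast
    nlinarith
  calc parityAdvantageBound n ℓ
      ≤ (ℓ + 1) * (2 * t ^ 3) ^ ℓ / (2 * (t ^ 5 / (2 * ℓ)) ^ ℓ) := by
        unfold parityAdvantageBound
        rw [hn06]
        gcongr
    _ = (ℓ + 1) / 2 * (4 * ℓ / t ^ 2) ^ ℓ := by
        rw [show 4 * (ℓ : ℝ) / t ^ 2 = 2 * t ^ 3 / (t ^ 5 / (2 * ℓ)) by field_simp; ring,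
          div_pow (2 * t ^ 3)]
        ring
    _ ≤ t * (1 / t) ^ ℓ := by
        gcongr ?_ * ?_ ^ _
        · linarith
        · rw [div_le_div_iff₀ (by positivity) ht0]; nlinarith
    _ = (t ^ (ℓ - 1))⁻¹ := by
        rw [one_div_pow, mul_one_div, ← pow_sub_one_mul (by omega : ℓ ≠ 0) t]
        field_simp

def Negligible (f : ℕ → ℝ) : Prop :=
  ∀ k : ℕ, ∃ N : ℕ, ∀ n, N ≤ n → |f n| ≤ ((n : ℝ))⁻¹ ^ k

theorem eventually_le_ceil_mul_log_and_le_rpow {c : ℝ} (hc : 0 < c) (K : ℕ) :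
    ∀ᶠ n : ℕ in atTop, K ≤ ⌈c * log n⌉₊ ∧ 4 * (⌈c * log n⌉₊ : ℝ) ≤ (n : ℝ) ^ (0.2 : ℝ) := by
  have hlog : Tendsto (fun n : ℕ => c * log n) atTop atTop :=
    (tendsto_log_atTop.comp tendsto_natCast_atTop_atTop).const_mul_atTop hc
  have hsmall : ∀ᶠ x : ℝ in atTop, 4 * (c * log x + 1) ≤ x ^ (0.2 : ℝ) := by
    have hr : (0 : ℝ) < 0.2 := by norm_num
    filter_upwards [(isLittleO_log_rpow_atTop hr).bound (by positivity : 0 < 1 / (8 * c)),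
      (tendsto_rpow_atTop hr).eventually_ge_atTop 8, eventually_ge_atTop 1] with x hlogx hx8 hx1
    rw [norm_of_nonneg (log_nonneg hx1), norm_of_nonneg (by positivity)] at hlogx
    have : c * log x ≤ x ^ (0.2 : ℝ) / 8 := by
      calc c * log x ≤ c * (1 / (8 * c) * x ^ (0.2 : ℝ)) := by gcongr
        _ = x ^ (0.2 : ℝ) / 8 := by field_simp
    linarith
  filter_upwards [(tendsto_nat_ceil_atTop.comp hlog).eventually_ge_atTop K,
    tendsto_natCast_atTop_atTop.eventually hsmall] with n hK hn
  refine ⟨hK, le_trans ?_ hn⟩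
  have := Nat.ceil_lt_add_one (mul_nonneg hc.le (log_natCast_nonneg n))
  linarith

theorem negligible_parityAdvantageBound {c : ℝ} (hc : 0 < c) :
    Negligible fun n => parityAdvantageBound n ⌈c * log n⌉₊ := by
  intro k
  obtain ⟨N, hN⟩ := eventually_atTop.mp (eventually_le_ceil_mul_log_and_le_rpow hc (5 * k + 1))
  refine ⟨N, fun n hn => ?_⟩
  obtain ⟨hℓ, hℓt⟩ := hN n hn
  set ℓ := ⌈c * log n⌉₊
  set t := (n : ℝ) ^ (0.2 : ℝ)
  have ht : (n : ℝ) = t ^ 5 := by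
    rw [← Real.rpow_natCast, ← Real.rpow_mul (Nat.cast_nonneg n)]
    norm_num
  have ht1 : 1 ≤ t := by
    have : (1 : ℝ) ≤ ℓ := mod_cast (by omega : 1 ≤ ℓ)
    linarith
  rw [abs_of_nonneg (by unfold parityAdvantageBound; positivity)]
  calc parityAdvantageBound n ℓ ≤ (t ^ (ℓ - 1))⁻¹ := parityAdvantageBound_le ht (by omega) hℓt
    _ ≤ (t ^ (5 * k))⁻¹ := inv_anti₀ (by positivity) (pow_le_pow_right₀ ht1 (by omega))
    _ = (n : ℝ)⁻¹ ^ k := by rw [pow_mul, ← ht, inv_pow]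

theorem natCast_le_sq_two_mul_rpow (n : ℕ) : (n : ℝ) ≤ (2 * (n : ℝ) ^ (0.6 : ℝ)) ^ 2 := by
  rcases Nat.eq_zero_or_pos n with rfl | hn
  · simp only [CharP.cast_eq_zero]; positivity
  have hn1 : (1 : ℝ) ≤ n := mod_cast hn
  calc (n : ℝ) = n ^ (1 : ℝ) := (rpow_one _).symm
    _ ≤ n ^ (1.2 : ℝ) := rpow_le_rpow_of_exponent_le hn1 (by norm_num)
    _ ≤ 4 * n ^ (1.2 : ℝ) := by linarith [rpow_nonneg (Nat.cast_nonneg n) 1.2]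
    _ = (2 * (n : ℝ) ^ (0.6 : ℝ)) ^ 2 := by
        rw [mul_pow, ← rpow_natCast ((n : ℝ) ^ (0.6 : ℝ)) 2, ← rpow_mul (Nat.cast_nonneg n)]
        norm_num

/-- For any constant `c > 0` there is a negligible function `negl` such that for
every `n`, every `(1/n^{0.4})`-biased string `a ∈ F_2^n` (i.e. with
`n/2 - n^{0.6} ≤ #{i : a_i = 1} ≤ n/2 + n^{0.6}`), and every bit `b`, a
uniformly random `s` of Hamming weight `⌈c log n⌉` satisfies
`Pr[a · s = b] ≤ 1/2 + negl(n)`. -/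
theorem biased_dot_sparse (c : ℝ) (hc : 0 < c) :
    ∃ negl : ℕ → ℝ,
      (∀ k : ℕ, ∃ N : ℕ, ∀ n, N ≤ n → |negl n| ≤ ((n : ℝ))⁻¹ ^ k) ∧
      ∀ (n : ℕ) (a : Fin n → ZMod 2) (b : ZMod 2),
        (n : ℝ)/2 - (n : ℝ) ^ (0.6 : ℝ)
            ≤ ((Finset.univ.filter (fun i => a i = 1)).card : ℝ) →
        ((Finset.univ.filter (fun i => a i = 1)).card : ℝ)
            ≤ (n : ℝ)/2 + (n : ℝ) ^ (0.6 : ℝ) →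
        (((Finset.univ.filter (fun s : Fin n → ZMod 2 =>
              (Finset.univ.filter (fun i => s i = 1)).card = ⌈c * Real.log n⌉₊)).filter
            (fun s => ∑ i, a i * s i = b)).card : ℝ)
          / ((Finset.univ.filter (fun s : Fin n → ZMod 2 =>
              (Finset.univ.filter (fun i => s i = 1)).card = ⌈c * Real.log n⌉₊)).card : ℝ)
          ≤ 1/2 + negl n := by
  refine ⟨fun n => parityAdvantageBound n ⌈c * log n⌉₊, negligible_parityAdvantageBound hc,
    fun n a b hlow hhigh => ?_⟩
  have hbias : |(n : ℝ) - 2 * #(univ.filter fun i => a i = 1)| ≤ 2 * (n : ℝ) ^ (0.6 : ℝ) := by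
    rw [abs_le]; constructor <;> linarith
  have hbound := card_filter_sum_mul_eq_div_card_le a b ⌈c * log n⌉₊
    (by rw [Fintype.card_fin]; exact natCast_le_sq_two_mul_rpow n) (by rwa [Fintype.card_fin])
  rwa [Fintype.card_fin] at hbound
end
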